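/- arXiv:1905.07408 — 2 statements merged into one kernel-verified Lean document; each statement's English description precedes it below -/
import Mathlib

section
/- Let Σ be a relational signature and let φ, φ' be conjunctive queries over Σ with the same set of free variables X = fv(φ) = fv(φ'). Then φ is contained in φ' (i.e. eval(φ, K) ⊆ eval(φ', K) for every Σ-structure K) if and only if there exists a homomorphism of Σ-structures f : CM(φ') → CM(φ) such that f(x) = x for every x ∈ X. -/
/-- A homomorphism of `Σ`-structures: a map on universes preserving all relations. -/
def IsHom {Sig : Type} (ar : Sig → ℕ) {U U' : Type}
    (K : (R : Sig) → Set (Fin (ar R) → U))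
    (K' : (R : Sig) → Set (Fin (ar R) → U'))
    (f : U → U') : Prop :=
  ∀ R : Sig, ∀ x ∈ K R, (f ∘ x) ∈ K' R

/-- A conjunctive query over signature `(Sig, ar)` with variables `V`:
a set `fv` of free variables and a set of atoms `(R, x)`. -/
structure CQ (Sig : Type) (ar : Sig → ℕ) (V : Type) where
  fv : Set V
  atoms : Set ((R : Sig) × (Fin (ar R) → V))

/-- An assignment `v : fv(φ) → U` satisfies `φ` in `K` iff it extends to a
total assignment `w : var(φ) → U` sending every atom into the structure. -/
def Satisfies {Sig : Type} {ar : Sig → ℕ} {V U : Type}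
    (φ : CQ Sig ar V) (K : (R : Sig) → Set (Fin (ar R) → U))
    (v : φ.fv → U) : Prop :=
  ∃ w : V → U, (∀ x : φ.fv, w x = v x) ∧ ∀ a ∈ φ.atoms, (w ∘ a.2) ∈ K a.1

/-- The canonical structure of a conjunctive query: universe `var(φ)`,
with `R` interpreted by the atoms of `φ` labelled `R`. -/
def CM {Sig : Type} {ar : Sig → ℕ} {V : Type} (φ : CQ Sig ar V) :
    (R : Sig) → Set (Fin (ar R) → V) :=
  fun R => {x | (⟨R, x⟩ : (R : Sig) × (Fin (ar R) → V)) ∈ φ.atoms}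

/-- Chandra–Merlin containment: for conjunctive queries `φ, φ'` with the same
set of free variables `X = fv(φ) = fv(φ')`, `φ ⊆ φ'` (evaluation containment in
every structure) iff there is a homomorphism `CM(φ') → CM(φ)` fixing `X`
pointwise. -/
theorem containment_iff_hom {Sig V : Type} (ar : Sig → ℕ) [Finite V]
    (φ φ' : CQ Sig ar V) (hfv : φ.fv = φ'.fv) :
    (∀ (U : Type) (K : (R : Sig) → Set (Fin (ar R) → U)) (v : φ.fv → U),
        Satisfies φ K v →
          Satisfies φ' K (fun x : φ'.fv => v ⟨x.1, hfv.symm ▸ x.2⟩))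
    ↔ ∃ f : V → V, IsHom ar (CM φ') (CM φ) f ∧ ∀ x ∈ φ.fv, f x = x := by
  constructor
  · intro h
    have hφ : Satisfies φ (CM φ) (fun x : φ.fv => x.1) :=
      ⟨id, fun x => rfl, fun a ha => ha⟩
    obtain ⟨w, hw1, hw2⟩ := h V (CM φ) (fun x : φ.fv => x.1) hφ
    refine ⟨w, fun R x hx => hw2 ⟨R, x⟩ hx, fun x hx => ?_⟩
    have hx' : x ∈ φ'.fv := hfv.subset hx
    exact hw1 ⟨x, hx'⟩
  · rintro ⟨f, hhom, hfix⟩ U K v ⟨w, hw1, hw2⟩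
    refine ⟨w ∘ f, fun x => ?_, fun a ha => ?_⟩
    · have hx : x.1 ∈ φ.fv := hfv.symm.subset x.2
      show w (f x.1) = v ⟨x.1, _⟩
      rw [hfix x.1 hx]
      exact hw1 ⟨x.1, hx⟩
    · have : (f ∘ a.2) ∈ CM φ a.1 := hhom a.1 a.2 ha
      exact hw2 ⟨a.1, f ∘ a.2⟩ this
end

section
/- Let Σ be a relational signature and K, K' finite Σ-structures. Then K and K' satisfy exactly the same closed conjunctive queries over Σ (i.e. for every conjunctive query φ with fv(φ) = ∅, the empty assignment satisfies φ in K iff it satisfies φ in K') if and only if there exist homomorphisms of Σ-structures K → K' and K' → K. -/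
/-!
A closed conjunctive query holds in `K` exactly when its canonical structure maps
homomorphically into `K` (Chandra–Merlin). Conversely, every finite structure `K` is the
canonical structure of a closed query over the variables `U(K)`, and that query holds in `K`
via the identity. So agreement on closed queries yields homomorphisms in both directions, and
homomorphisms in both directions give agreement on all closed queries because homomorphisms
compose.
-/

section

variable {Sig : Type} {ar : Sig → ℕ}

theorem IsHom.id {U : Type} (K : (R : Sig) → Set (Fin (ar R) → U)) : IsHom ar K K id :=
  fun _ _ hx => hx

theorem IsHom.comp {U U' U'' : Type} {K : (R : Sig) → Set (Fin (ar R) → U)}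
    {K' : (R : Sig) → Set (Fin (ar R) → U')} {K'' : (R : Sig) → Set (Fin (ar R) → U'')}
    {g : U' → U''} {f : U → U'} (hg : IsHom ar K' K'' g) (hf : IsHom ar K K' f) :
    IsHom ar K K'' (g ∘ f) :=
  fun R x hx => hg R (f ∘ x) (hf R x hx)

theorem satisfies_iff_exists_isHom_CM {V U : Type} {φ : CQ Sig ar V}
    {K : (R : Sig) → Set (Fin (ar R) → U)} (hfv : φ.fv = ∅) (v : φ.fv → U) :
    Satisfies φ K v ↔ ∃ w : V → U, IsHom ar (CM φ) K w := by
  have no_free_var (x : φ.fv) : False := by simpa [hfv] using x.2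
  exact ⟨fun ⟨w, _, hw⟩ => ⟨w, fun R x hx => hw ⟨R, x⟩ hx⟩,
    fun ⟨w, hw⟩ => ⟨w, fun x => (no_free_var x).elim, fun a ha => hw a.1 a.2 ha⟩⟩

def canonicalQuery {U : Type} (K : (R : Sig) → Set (Fin (ar R) → U)) : CQ Sig ar U :=
  ⟨∅, {a | a.2 ∈ K a.1}⟩

theorem CM_canonicalQuery {U : Type} (K : (R : Sig) → Set (Fin (ar R) → U)) :
    CM (canonicalQuery K) = K :=
  rfl

theorem satisfies_canonicalQuery_iff {U U' : Type} (K : (R : Sig) → Set (Fin (ar R) → U))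
    (K' : (R : Sig) → Set (Fin (ar R) → U')) (v : (canonicalQuery K).fv → U') :
    Satisfies (canonicalQuery K) K' v ↔ ∃ f : U → U', IsHom ar K K' f := by
  rw [satisfies_iff_exists_isHom_CM rfl, CM_canonicalQuery]

end

/-- Two finite structures satisfy the same closed conjunctive queries iff they
are homomorphically equivalent. -/
theorem same_closed_queries_iff_hom_equiv {Sig UK UK' : Type} (ar : Sig → ℕ)
    [Finite UK] [Finite UK']
    (K : (R : Sig) → Set (Fin (ar R) → UK))
    (K' : (R : Sig) → Set (Fin (ar R) → UK')) :
    (∀ (V : Type) (_ : Finite V) (φ : CQ Sig ar V), φ.fv = ∅ →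
        ∀ (v : φ.fv → UK) (v' : φ.fv → UK'),
          (Satisfies φ K v ↔ Satisfies φ K' v'))
    ↔ ((∃ f : UK → UK', IsHom ar K K' f) ∧ (∃ g : UK' → UK, IsHom ar K' K g)) := by
  constructor
  · intro same_queries
    have agree_on_canonical {U : Type} [Finite U] (L : (R : Sig) → Set (Fin (ar R) → U)) :=
      same_queries U inferInstance (canonicalQuery L) rfl (fun x => x.2.elim) (fun x => x.2.elim)
    have hK := agree_on_canonical K
    have hK' := agree_on_canonical K'
    simp only [satisfies_canonicalQuery_iff] at hK hK'
    exact ⟨hK.mp ⟨id, IsHom.id K⟩, hK'.mpr ⟨id, IsHom.id K'⟩⟩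
  · rintro ⟨⟨f, hf⟩, ⟨g, hg⟩⟩ V _ φ hfv v v'
    rw [satisfies_iff_exists_isHom_CM hfv, satisfies_iff_exists_isHom_CM hfv]
    exact ⟨fun ⟨w, hw⟩ => ⟨f ∘ w, hf.comp hw⟩, fun ⟨w, hw⟩ => ⟨g ∘ w, hg.comp hw⟩⟩
end
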